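/- arXiv:2406.08711 — 8 statements merged into one kernel-verified Lean document; each statement's English description precedes it below -/
import Mathlib

section
/- Let v be an integrable real random variable, c > 0, and σ the unique real with E[(v - σ)^+] = c. Let κ = min(v, σ). Then for any random variables A, I taking values in {0,1} with A ≤ I and with I independent of v (I is decided before observing v), E[A·v - I·c] ≤ E[A·κ]. Moreover equality holds if and only if P(I = 1, v > σ, A = 0) = 0. -/
/-!
Write `g = (v - σ)⁺`, so that `v = min v σ + g` and `E[g] = c`. Since `I` is independent of `v`,
hence of `g`, the expected cost is `E[I·c] = E[I]·E[g] = E[I·g]`, and therefore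
`E[A·κ] - E[A·v - I·c] = E[(I - A)·g]`. The integrand is nonnegative because `A ≤ I`, and
it is nonzero exactly on the event `{I = 1, A = 0, v > σ}`.
-/

open MeasureTheory ProbabilityTheory

lemma sub_min_eq_max_sub_zero (x σ : ℝ) : x - min x σ = max (x - σ) 0 := by
  rcases le_total x σ with h | h
  · simp [min_eq_left h, max_eq_right (sub_nonpos.2 h)]
  · simp [min_eq_right h, max_eq_left (sub_nonneg.2 h)]

lemma sub_mul_max_sub_zero_ne_zero_iff {a i x σ : ℝ} (ha : a = 0 ∨ a = 1) (hi : i = 0 ∨ i = 1)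
    (hai : a ≤ i) : (i - a) * max (x - σ) 0 ≠ 0 ↔ i = 1 ∧ σ < x ∧ a = 0 := by
  have hpos : max (x - σ) 0 ≠ 0 ↔ σ < x := by rw [Ne, max_eq_right_iff, not_le, sub_pos]
  rcases hi with rfl | rfl
  · obtain rfl : a = 0 := ha.resolve_right (by rintro rfl; norm_num at hai)
    simp
  · rcases ha with rfl | rfl <;> simp [hpos]

section

variable {Ω : Type*} [MeasurableSpace Ω] {μ : Measure Ω} {v A I : Ω → ℝ} {c σ C : ℝ}

lemma integral_mul_min_sub_integral_eq [IsFiniteMeasure μ] (hv : Integrable v μ)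
    (hA : Measurable A) (hI : Measurable I) (hAC : ∀ ω, ‖A ω‖ ≤ C) (hIC : ∀ ω, ‖I ω‖ ≤ C)
    (hindep : IndepFun I v μ) (hσ : ∫ ω, max (v ω - σ) 0 ∂μ = c) :
    ∫ ω, A ω * min (v ω) σ ∂μ - ∫ ω, (A ω * v ω - I ω * c) ∂μ
      = ∫ ω, (I ω - A ω) * max (v ω - σ) 0 ∂μ := by
  have hg : Integrable (fun ω => max (v ω - σ) 0) μ := (hv.sub (integrable_const σ)).pos_part
  have hκ : Integrable (fun ω => min (v ω) σ) μ := by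
    convert hv.sub hg using 1
    ext ω
    simp [← sub_min_eq_max_sub_zero]
  have hAg := hg.bdd_mul hA.aestronglyMeasurable (ae_of_all _ hAC)
  have hIg := hg.bdd_mul hI.aestronglyMeasurable (ae_of_all _ hIC)
  have hAv := hv.bdd_mul hA.aestronglyMeasurable (ae_of_all _ hAC)
  have hAκ := hκ.bdd_mul hA.aestronglyMeasurable (ae_of_all _ hAC)
  have hIc := (integrable_const (μ := μ) c).bdd_mul hI.aestronglyMeasurable (ae_of_all _ hIC)
  have hcost : ∫ ω, I ω * max (v ω - σ) 0 ∂μ = ∫ ω, I ω * c ∂μ := by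
    have hIg_indep : IndepFun I (fun ω => max (v ω - σ) 0) μ :=
      hindep.comp measurable_id ((measurable_id.sub_const σ).max measurable_const)
    rw [integral_mul_const, ← hσ]
    exact hIg_indep.integral_mul_eq_mul_integral hI.aestronglyMeasurable hg.aestronglyMeasurable
  have hAg_eq : ∫ ω, A ω * max (v ω - σ) 0 ∂μ
      = ∫ ω, A ω * v ω ∂μ - ∫ ω, A ω * min (v ω) σ ∂μ := by
    rw [← integral_sub hAv hAκ]
    congr with ω
    rw [← sub_min_eq_max_sub_zero, mul_sub]
  calc _ = ∫ ω, I ω * max (v ω - σ) 0 ∂μ - ∫ ω, A ω * max (v ω - σ) 0 ∂μ := by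
        rw [hAg_eq, integral_sub hAv hIc, hcost]; ring
    _ = _ := by rw [← integral_sub hIg hAg]; simp only [sub_mul]

end

theorem pandora_key_amortization_general
    {Ω : Type*} [MeasurableSpace Ω] (μ : Measure Ω) [IsProbabilityMeasure μ]
    (v A I : Ω → ℝ) (hv : Integrable v μ)
    (hAmeas : Measurable A) (hImeas : Measurable I)
    (hA01 : ∀ ω, A ω = 0 ∨ A ω = 1) (hI01 : ∀ ω, I ω = 0 ∨ I ω = 1)
    (hAI : ∀ ω, A ω ≤ I ω)
    (hindep : ProbabilityTheory.IndepFun I v μ)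
    (c σ : ℝ)
    (hσ : ∫ ω, max (v ω - σ) 0 ∂μ = c) :
    (∫ ω, (A ω * v ω - I ω * c) ∂μ ≤ ∫ ω, A ω * min (v ω) σ ∂μ) ∧
    ((∫ ω, (A ω * v ω - I ω * c) ∂μ = ∫ ω, A ω * min (v ω) σ ∂μ) ↔
      μ {ω | I ω = 1 ∧ σ < v ω ∧ A ω = 0} = 0) := by
  have hbound : ∀ {a : ℝ}, a = 0 ∨ a = 1 → ‖a‖ ≤ 1 := by rintro a (rfl | rfl) <;> simp
  have hgap := integral_mul_min_sub_integral_eq hv hAmeas hImeas (fun ω => hbound (hA01 ω))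
    (fun ω => hbound (hI01 ω)) hindep hσ
  have hnonneg : 0 ≤ fun ω => (I ω - A ω) * max (v ω - σ) 0 := fun ω =>
    mul_nonneg (sub_nonneg.2 (hAI ω)) (le_max_right _ _)
  have hIA : ∀ ω, ‖I ω - A ω‖ ≤ 1 := fun ω => by
    rcases hA01 ω with hA | hA <;> rcases hI01 ω with hI | hI <;> simp [hA, hI]
  have hint : Integrable (fun ω => (I ω - A ω) * max (v ω - σ) 0) μ :=
    (hv.sub (integrable_const σ)).pos_part.bdd_mul (hImeas.sub hAmeas).aestronglyMeasurable
      (ae_of_all _ hIA)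
  refine ⟨by linarith [integral_nonneg (μ := μ) hnonneg], ?_⟩
  rw [eq_comm, ← sub_eq_zero, hgap, integral_eq_zero_iff_of_nonneg hnonneg hint,
    Filter.EventuallyEq, ae_iff]
  simp only [Pi.zero_apply, sub_mul_max_sub_zero_ne_zero_iff (hA01 _) (hI01 _) (hAI _)]

/-- The key amortization lemma for a single Pandora box: with Weitzman index `σ`
(`E[(v - σ)⁺] = c`), capped value `κ = min v σ`, and 0/1-valued claiming/inspection
indicators `A ≤ I` with `I` independent of `v`, we have
`E[A·v - I·c] ≤ E[A·κ]`, with equality iff `P(I = 1, v > σ, A = 0) = 0`. -/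
theorem pandora_key_amortization
    {Ω : Type*} [MeasurableSpace Ω] (μ : Measure Ω) [IsProbabilityMeasure μ]
    (v A I : Ω → ℝ) (hv : Integrable v μ)
    (hAmeas : Measurable A) (hImeas : Measurable I)
    (hA01 : ∀ ω, A ω = 0 ∨ A ω = 1) (hI01 : ∀ ω, I ω = 0 ∨ I ω = 1)
    (hAI : ∀ ω, A ω ≤ I ω)
    (hindep : ProbabilityTheory.IndepFun I v μ)
    (c σ : ℝ) (hc : 0 < c)
    (hσ : ∫ ω, max (v ω - σ) 0 ∂μ = c) :
    (∫ ω, (A ω * v ω - I ω * c) ∂μ ≤ ∫ ω, A ω * min (v ω) σ ∂μ) ∧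
    ((∫ ω, (A ω * v ω - I ω * c) ∂μ = ∫ ω, A ω * min (v ω) σ ∂μ) ↔
      μ {ω | I ω = 1 ∧ σ < v ω ∧ A ω = 0} = 0) :=
  pandora_key_amortization_general μ v A I hv hAmeas hImeas hA01 hI01 hAI hindep c σ hσ
end

section
/- Let v be integrable, c > 0, σ the Weitzman index (E[(v-σ)^+] = c), and κ = min(v, σ). Then E[κ^+] ≥ E[A·v] - I·c for the one-box policy that always inspects (I = 1) and claims iff v > 0; in particular E[max(min(v,σ),0)] equals the optimal expected welfare E[(v ∧ σ)^+] of any single-box obligatory-inspection policy. -/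
open MeasureTheory Filter

/-- Single Pandora box: with Weitzman index `σ` (`E[(v - σ)⁺] = c`) and capped value
`κ = min v σ`, the expected capped gain `E[κ⁺]` upper-bounds the welfare `E[A·v] - c`
of any claiming rule `A` that always inspects; in particular it dominates the policy
claiming iff `v > 0`, whose welfare is `E[v⁺] - c`; and `E[κ⁺]` equals the optimal
expected welfare `max (E[v⁺] - c) 0` of any single-box obligatory-inspection policy. -/
theorem pandora_one_box_optimal
    {Ω : Type*} [MeasurableSpace Ω] (μ : Measure Ω) [IsProbabilityMeasure μ]
    (v : Ω → ℝ) (hv : Integrable v μ) (hvmeas : Measurable v)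
    (c σ : ℝ) (hc : 0 < c)
    (hσ : ∫ ω, max (v ω - σ) 0 ∂μ = c) :
    (∀ A : Ω → ℝ, Measurable A → (∀ ω, A ω = 0 ∨ A ω = 1) →
      (∫ ω, A ω * v ω ∂μ) - c ≤ ∫ ω, max (min (v ω) σ) 0 ∂μ) ∧
    ((∫ ω, max (v ω) 0 ∂μ) - c ≤ ∫ ω, max (min (v ω) σ) 0 ∂μ) ∧
    (∫ ω, max (min (v ω) σ) 0 ∂μ = max ((∫ ω, max (v ω) 0 ∂μ) - c) 0) := by
  have hv0 : Integrable (fun ω => max (v ω) 0) μ := hv.pos_part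
  have hvσ : Integrable (fun ω => max (v ω - σ) 0) μ := (hv.sub (integrable_const σ)).pos_part
  have hAint : ∀ A : Ω → ℝ, Measurable A → (∀ ω, A ω = 0 ∨ A ω = 1) →
      Integrable (fun ω => A ω * v ω) μ := by
    intro A hAm hA01
    refine hv.abs.mono' ((hAm.mul hvmeas).aestronglyMeasurable)
      (Eventually.of_forall fun ω => ?_)
    rcases hA01 ω with h | h <;> simp [h, Real.norm_eq_abs, abs_nonneg]
  have hAle : ∀ A : Ω → ℝ, (∀ ω, A ω = 0 ∨ A ω = 1) →
      ∀ ω, A ω * v ω ≤ max (v ω) 0 := by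
    intro A hA01 ω
    rcases hA01 ω with h | h <;> simp [h, le_max_iff, le_refl]
  rcases le_or_gt 0 σ with hs | hs
  · have hpt : ∀ ω, max (min (v ω) σ) 0 = max (v ω) 0 - max (v ω - σ) 0 := by
      intro ω
      rcases le_total (v ω) σ with h | h
      · rw [min_eq_left h, max_eq_right (by linarith : v ω - σ ≤ 0), sub_zero]
      · rw [min_eq_right h, max_eq_left hs, max_eq_left (by linarith : (0:ℝ) ≤ v ω),
          max_eq_left (by linarith : (0:ℝ) ≤ v ω - σ)]
        ring
    have hInt : ∫ ω, max (min (v ω) σ) 0 ∂μ = (∫ ω, max (v ω) 0 ∂μ) - c := by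
      rw [← hσ, ← integral_sub hv0 hvσ]
      exact integral_congr_ae (Eventually.of_forall hpt)
    have hcle : c ≤ ∫ ω, max (v ω) 0 ∂μ := by
      rw [← hσ]
      exact integral_mono hvσ hv0 fun ω => max_le_max (sub_le_self _ hs) le_rfl
    refine ⟨?_, ?_, ?_⟩
    · intro A hAm hA01
      have h1 := integral_mono (hAint A hAm hA01) hv0 (hAle A hA01)
      linarith
    · linarith
    · rw [hInt, max_eq_left (by linarith)]
  · have hz : ∀ ω, max (min (v ω) σ) 0 = 0 := fun ω =>
      max_eq_right (le_of_lt (lt_of_le_of_lt (min_le_right _ _) hs))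
    have hIz : ∫ ω, max (min (v ω) σ) 0 ∂μ = 0 := by simp [hz]
    have hle : (∫ ω, max (v ω) 0 ∂μ) ≤ c := by
      rw [← hσ]
      exact integral_mono hv0 hvσ fun ω => max_le_max (by linarith) le_rfl
    refine ⟨?_, by linarith, ?_⟩
    · intro A hAm hA01
      have h1 := integral_mono (hAint A hAm hA01) hv0 (hAle A hA01)
      linarith
    · rw [hIz, max_eq_right (by linarith)]
end

section
/- For any algorithm in the nested-box model (decisions to open box ℓ of basket i are measurable in information available before observing signal s_i^(ℓ)), the expected welfare contribution of basket i, E[A_i v_i - Σ_{ℓ=1}^d I_i^(ℓ) c_i^(ℓ)], equals E[A_i v_i - Σ_{ℓ=1}^d I_i^(ℓ) (κ_i^(ℓ+1) - κ_i^(ℓ))]. -/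
open MeasureTheory Filter

/-!
Since `κ ℓ = min (σ ℓ) (κ (ℓ + 1))`, the increment `κ (ℓ + 1) - κ ℓ` is exactly
`(κ (ℓ + 1) - σ ℓ)⁺`, whose conditional expectation given the information before box `ℓ`
is the cost `c ℓ`. The opening decision `I ℓ` is measurable with respect to that
information, so it can be pulled out of the conditional expectation, and taking
expectations gives `E[I ℓ · c ℓ] = E[I ℓ · (κ (ℓ + 1) - κ ℓ)]` box by box.
-/

theorem sub_min_eq_max_sub_zero_s5 {α : Type*} [AddCommGroup α] [LinearOrder α]
    [IsOrderedAddMonoid α] (a b : α) : a - min b a = max (a - b) 0 := by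
  rcases le_total b a with h | h
  · rw [min_eq_left h, max_eq_left (sub_nonneg.2 h)]
  · rw [min_eq_right h, sub_self, max_eq_right (sub_nonpos.2 h)]

namespace MeasureTheory

variable {Ω : Type*} {m m0 : MeasurableSpace Ω} {μ : Measure Ω}

theorem integral_sub_congr_right {E : Type*} [NormedAddCommGroup E] [NormedSpace ℝ E]
    {f g₁ g₂ : Ω → E} (hg₁ : Integrable g₁ μ) (hg₂ : Integrable g₂ μ)
    (h : ∫ ω, g₁ ω ∂μ = ∫ ω, g₂ ω ∂μ) :
    ∫ ω, (f ω - g₁ ω) ∂μ = ∫ ω, (f ω - g₂ ω) ∂μ := by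
  by_cases hf : Integrable f μ
  · rw [integral_sub hf hg₁, integral_sub hf hg₂, h]
  · have h_not_int : ∀ {g : Ω → E}, Integrable g μ →
        ¬Integrable (fun ω => f ω - g ω) μ := fun {g} hg hfg =>
      hf ((hfg.add hg).congr (ae_of_all _ fun ω => sub_add_cancel (f ω) (g ω)))
    rw [integral_undef (h_not_int hg₁), integral_undef (h_not_int hg₂)]

theorem integral_mul_condExp (hm : m ≤ m0) [SigmaFinite (μ.trim hm)]
    {g f : Ω → ℝ} {C : ℝ} (hg : StronglyMeasurable[m] g)
    (hgC : ∀ᵐ ω ∂μ, ‖g ω‖ ≤ C) (hf : Integrable f μ) :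
    ∫ ω, g ω * (μ[f | m]) ω ∂μ = ∫ ω, g ω * f ω ∂μ := by
  have hgf : Integrable (g * f) μ := hf.bdd_mul (hg.mono hm).aestronglyMeasurable hgC
  calc ∫ ω, g ω * (μ[f | m]) ω ∂μ = ∫ ω, (μ[g * f | m]) ω ∂μ :=
        integral_congr_ae (condExp_mul_of_stronglyMeasurable_left hg hgf hf).symm
    _ = ∫ ω, g ω * f ω ∂μ := integral_condExp hm

theorem integral_mul_cost_eq_integral_mul_sub_min (hm : m ≤ m0) [SigmaFinite (μ.trim hm)]
    {I σ κ : Ω → ℝ} {C c : ℝ} (hI : StronglyMeasurable[m] I)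
    (hIC : ∀ᵐ ω ∂μ, ‖I ω‖ ≤ C) (hκ : Integrable κ μ)
    (hmin : Integrable (fun ω => min (σ ω) (κ ω)) μ)
    (hc : μ[fun ω => max (κ ω - σ ω) 0 | m] =ᵐ[μ] fun _ => c) :
    ∫ ω, I ω * c ∂μ = ∫ ω, I ω * (κ ω - min (σ ω) (κ ω)) ∂μ := by
  have hgap : (fun ω => κ ω - min (σ ω) (κ ω)) = fun ω => max (κ ω - σ ω) 0 :=
    funext fun ω => sub_min_eq_max_sub_zero_s5 _ _
  have hgap_int : Integrable (fun ω => max (κ ω - σ ω) 0) μ := hgap ▸ hκ.sub hmin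
  calc ∫ ω, I ω * c ∂μ = ∫ ω, I ω * (μ[fun ω => max (κ ω - σ ω) 0 | m]) ω ∂μ :=
        integral_congr_ae (hc.mono fun ω hω => by simp only [hω])
    _ = ∫ ω, I ω * max (κ ω - σ ω) 0 ∂μ := integral_mul_condExp hm hI hIC hgap_int
    _ = ∫ ω, I ω * (κ ω - min (σ ω) (κ ω)) ∂μ := by simp only [sub_min_eq_max_sub_zero_s5]

end MeasureTheory

theorem nested_cost_amortization_general
    {Ω : Type*} [m0 : MeasurableSpace Ω] (μ : Measure Ω) [IsProbabilityMeasure μ]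
    (d : ℕ) (𝒢 : ℕ → MeasurableSpace Ω) (h𝒢 : ∀ ℓ, 𝒢 ℓ ≤ m0)
    (σidx κ : ℕ → Ω → ℝ) (v A : Ω → ℝ) (I : ℕ → Ω → ℝ) (c : ℕ → ℝ)
    (hκ : ∀ ℓ, 1 ≤ ℓ → ℓ ≤ d → κ ℓ = fun ω => min (σidx ℓ ω) (κ (ℓ + 1) ω))
    (hσ : ∀ ℓ, 1 ≤ ℓ → ℓ ≤ d →
      (μ[(fun ω => max (κ (ℓ + 1) ω - σidx ℓ ω) 0) | 𝒢 ℓ]) =ᵐ[μ] fun _ => c ℓ)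
    (hImeas : ∀ ℓ, 1 ≤ ℓ → ℓ ≤ d → Measurable[𝒢 ℓ] (I ℓ))
    (hI01 : ∀ ℓ ω, I ℓ ω = 0 ∨ I ℓ ω = 1)
    (hκint : ∀ ℓ, 1 ≤ ℓ → ℓ ≤ d + 1 → Integrable (κ ℓ) μ) :
    ∫ ω, (A ω * v ω - ∑ ℓ ∈ Finset.Icc 1 d, I ℓ ω * c ℓ) ∂μ =
      ∫ ω, (A ω * v ω - ∑ ℓ ∈ Finset.Icc 1 d, I ℓ ω * (κ (ℓ + 1) ω - κ ℓ ω)) ∂μ := by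
  have hI_le : ∀ ℓ, ∀ᵐ ω ∂μ, ‖I ℓ ω‖ ≤ 1 := fun ℓ =>
    ae_of_all _ fun ω => by rcases hI01 ℓ ω with h | h <;> simp [h]
  have hI_sm : ∀ ℓ ∈ Finset.Icc 1 d, StronglyMeasurable[𝒢 ℓ] (I ℓ) := fun ℓ hℓ =>
    (hImeas ℓ (Finset.mem_Icc.1 hℓ).1 (Finset.mem_Icc.1 hℓ).2).stronglyMeasurable
  have hI_aesm : ∀ ℓ ∈ Finset.Icc 1 d, AEStronglyMeasurable (I ℓ) μ := fun ℓ hℓ =>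
    ((hI_sm ℓ hℓ).mono (h𝒢 ℓ)).aestronglyMeasurable
  have hcost_int : ∀ ℓ ∈ Finset.Icc 1 d, Integrable (fun ω => I ℓ ω * c ℓ) μ :=
    fun ℓ hℓ => (integrable_const (c ℓ)).bdd_mul (hI_aesm ℓ hℓ) (hI_le ℓ)
  have hgap_int : ∀ ℓ ∈ Finset.Icc 1 d,
      Integrable (fun ω => I ℓ ω * (κ (ℓ + 1) ω - κ ℓ ω)) μ := fun ℓ hℓ => by
    obtain ⟨h1, h2⟩ := Finset.mem_Icc.1 hℓ
    exact ((hκint (ℓ + 1) (by omega) (by omega)).sub (hκint ℓ h1 (by omega))).bdd_mul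
      (hI_aesm ℓ hℓ) (hI_le ℓ)
  have hbox : ∀ ℓ ∈ Finset.Icc 1 d,
      ∫ ω, I ℓ ω * c ℓ ∂μ = ∫ ω, I ℓ ω * (κ (ℓ + 1) ω - κ ℓ ω) ∂μ := by
    intro ℓ hℓ
    obtain ⟨h1, h2⟩ := Finset.mem_Icc.1 hℓ
    have hmin_int := hκint ℓ h1 (by omega)
    rw [hκ ℓ h1 h2] at hmin_int ⊢
    exact integral_mul_cost_eq_integral_mul_sub_min (h𝒢 ℓ) (hI_sm ℓ hℓ) (hI_le ℓ)
      (hκint (ℓ + 1) (by omega) (by omega)) hmin_int (hσ ℓ h1 h2)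
  refine integral_sub_congr_right (integrable_finsetSum _ hcost_int)
    (integrable_finsetSum _ hgap_int) ?_
  rw [integral_finsetSum _ hcost_int, integral_finsetSum _ hgap_int]
  exact Finset.sum_congr rfl hbox

/-- Cost amortization for a nested Pandora basket: `𝒢 ℓ` is the σ-algebra of
information available before opening box `ℓ` (generated by signals `s^(1),…,s^(ℓ-1)`),
the nested Weitzman index `σidx ℓ` satisfies
`E[(κ (ℓ+1) - σidx ℓ)⁺ | 𝒢 ℓ] = c ℓ`, the inspection indicator `I ℓ` is
`𝒢 ℓ`-measurable (decided before observing signal `s^(ℓ)`), and the capped values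
satisfy `κ (d+1) = v`, `κ ℓ = min (σidx ℓ) (κ (ℓ+1))`. Then the expected welfare
contribution `E[A·v - ∑ I ℓ · c ℓ]` equals
`E[A·v - ∑ I ℓ · (κ (ℓ+1) - κ ℓ)]`. -/
theorem nested_cost_amortization
    {Ω : Type*} [m0 : MeasurableSpace Ω] (μ : Measure Ω) [IsProbabilityMeasure μ]
    (d : ℕ) (𝒢 : ℕ → MeasurableSpace Ω) (h𝒢 : ∀ ℓ, 𝒢 ℓ ≤ m0)
    (σidx κ : ℕ → Ω → ℝ) (v A : Ω → ℝ) (I : ℕ → Ω → ℝ) (c : ℕ → ℝ)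
    (hκtop : κ (d + 1) = v)
    (hκ : ∀ ℓ, 1 ≤ ℓ → ℓ ≤ d → κ ℓ = fun ω => min (σidx ℓ ω) (κ (ℓ + 1) ω))
    (hσmeas : ∀ ℓ, Measurable (σidx ℓ)) (hκmeas : ∀ ℓ, Measurable (κ ℓ))
    (hσ : ∀ ℓ, 1 ≤ ℓ → ℓ ≤ d →
      (μ[(fun ω => max (κ (ℓ + 1) ω - σidx ℓ ω) 0) | 𝒢 ℓ]) =ᵐ[μ] fun _ => c ℓ)
    (hImeas : ∀ ℓ, 1 ≤ ℓ → ℓ ≤ d → Measurable[𝒢 ℓ] (I ℓ))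
    (hI01 : ∀ ℓ ω, I ℓ ω = 0 ∨ I ℓ ω = 1)
    (hAmeas : Measurable A) (hA01 : ∀ ω, A ω = 0 ∨ A ω = 1)
    (hvint : Integrable v μ)
    (hκint : ∀ ℓ, 1 ≤ ℓ → ℓ ≤ d + 1 → Integrable (κ ℓ) μ) :
    ∫ ω, (A ω * v ω - ∑ ℓ ∈ Finset.Icc 1 d, I ℓ ω * c ℓ) ∂μ =
      ∫ ω, (A ω * v ω - ∑ ℓ ∈ Finset.Icc 1 d, I ℓ ω * (κ (ℓ + 1) ω - κ ℓ ω)) ∂μ :=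
  nested_cost_amortization_general (m0 := m0) μ d 𝒢 h𝒢 σidx κ v A I c hκ hσ hImeas hI01 hκint
end

section
/- For any algorithm in the nested-box model, E[A_i v_i - Σ_{ℓ=1}^d I_i^(ℓ) c_i^(ℓ)] ≤ E[A_i κ_i^(1)], with equality if and only if the algorithm is non-exposed on basket i (i.e. almost surely, for every ℓ, if box ℓ is the last opened and basket i is unclaimed, then κ_i^(ℓ+1) ≤ γ_i^(ℓ)). -/
open MeasureTheory

/-
Write `Δ_ℓ = κ_{ℓ+1} - κ_ℓ = (κ_{ℓ+1} - σ_ℓ)⁺`. Since `I_ℓ` is `𝒢_ℓ`-measurable and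
`E[Δ_ℓ | 𝒢_ℓ] = c_ℓ`, inspecting box `ℓ` costs on average exactly the gain `I_ℓ Δ_ℓ`.
Summation by parts turns `∑ I_ℓ Δ_ℓ` into `A (v - κ_1)` plus the nonnegative slack
`∑ (I_ℓ - I_{ℓ+1}) (κ_{ℓ+1} - κ_1)`, so `E[A v - ∑ I_ℓ c_ℓ] = E[A κ_1] - E[slack]`.
Since `κ_1 = min (γ_ℓ, κ_{ℓ+1})`, the `ℓ`-th slack term is positive exactly when `ℓ` is the
last opened box and `γ_ℓ < κ_{ℓ+1}`, which is the exposure event.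
-/

theorem Finset.sum_Icc_mul_sub_by_parts {R : Type*} [CommRing R] (a b : ℕ → R) (d : ℕ) :
    ∑ ℓ ∈ Finset.Icc 1 d, a ℓ * (b (ℓ + 1) - b ℓ) =
      a (d + 1) * (b (d + 1) - b 1) +
        ∑ ℓ ∈ Finset.Icc 1 d, (a ℓ - a (ℓ + 1)) * (b (ℓ + 1) - b 1) := by
  induction d with
  | zero => simp
  | succ d ih =>
    rw [Finset.sum_Icc_succ_top (by omega), Finset.sum_Icc_succ_top (by omega), ih]
    ring

theorem min_prefixMin_suffixMin_eq {α : Type*} [LinearOrder α] {d : ℕ} {σ κ γ : ℕ → α}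
    (hκ : ∀ ℓ, 1 ≤ ℓ → ℓ ≤ d → κ ℓ = min (σ ℓ) (κ (ℓ + 1)))
    (hγ1 : γ 1 = σ 1)
    (hγ : ∀ ℓ, 1 ≤ ℓ → ℓ + 1 ≤ d → γ (ℓ + 1) = min (γ ℓ) (σ (ℓ + 1))) :
    ∀ ℓ, 1 ≤ ℓ → ℓ ≤ d → min (γ ℓ) (κ (ℓ + 1)) = κ 1 := by
  intro ℓ hℓ
  induction ℓ, hℓ using Nat.le_induction with
  | base => intro hd; rw [hγ1, hκ 1 le_rfl hd]
  | succ ℓ hℓ ih =>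
    intro hd
    rw [hγ ℓ hℓ hd, min_assoc, ← hκ (ℓ + 1) (by omega) hd, ih (by omega)]

theorem sub_mul_sub_min_ne_zero_iff {a b x y : ℝ} (ha : a = 0 ∨ a = 1) (hb : b = 0 ∨ b = 1)
    (hba : b ≤ a) : (a - b) * (y - min x y) ≠ 0 ↔ a = 1 ∧ b = 0 ∧ x < y := by
  rcases ha with rfl | rfl <;> rcases hb with rfl | rfl <;> norm_num at hba <;>
    simp [sub_eq_zero]

theorem Finset.sub_sum_le_self_and_eq_self_iff {ι : Type*} {s : Finset ι} {f : ι → ℝ}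
    {P : ι → Prop} (x : ℝ) (hf : ∀ i ∈ s, 0 ≤ f i ∧ (f i = 0 ↔ P i)) :
    x - ∑ i ∈ s, f i ≤ x ∧ (x - ∑ i ∈ s, f i = x ↔ ∀ i ∈ s, P i) := by
  refine ⟨sub_le_self _ (Finset.sum_nonneg fun i hi => (hf i hi).1), ?_⟩
  rw [sub_eq_self, Finset.sum_eq_zero_iff_of_nonneg fun i hi => (hf i hi).1]
  exact forall₂_congr fun i hi => (hf i hi).2

theorem integral_mul_sub_eq_zero_of_condExp_eq_const {Ω : Type*} {m m0 : MeasurableSpace Ω}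
    {μ : Measure Ω} [IsFiniteMeasure μ] (hm : m ≤ m0) {g f : Ω → ℝ} {c C : ℝ}
    (hg : StronglyMeasurable[m] g) (hgC : ∀ ω, ‖g ω‖ ≤ C) (hf : Integrable f μ)
    (hfc : μ[f | m] =ᵐ[μ] fun _ => c) :
    ∫ ω, g ω * (f ω - c) ∂μ = 0 := by
  have hfc_int : Integrable (f - fun _ => c) μ := hf.sub (integrable_const c)
  have hprod_int : Integrable (g * (f - fun _ => c)) μ :=
    hfc_int.bdd_mul (hg.mono hm).aestronglyMeasurable (ae_of_all _ hgC)
  have hcentered : μ[f - fun _ => c | m] =ᵐ[μ] 0 := by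
    filter_upwards [condExp_sub hf (integrable_const c) m, hfc] with ω h h'
    simp [h, h', condExp_const hm]
  calc ∫ ω, g ω * (f ω - c) ∂μ = ∫ ω, (μ[g * (f - fun _ => c) | m]) ω ∂μ :=
        (integral_condExp hm).symm
    _ = 0 := by
      rw [integral_eq_zero_of_ae]
      filter_upwards [condExp_mul_of_stronglyMeasurable_left hg hprod_int hfc_int,
        hcentered] with ω h h'
      simp [h, h']

section Slack

variable {Ω : Type*} {I κ : ℕ → Ω → ℝ} {γ : Ω → ℝ} {ℓ : ℕ}

def slack (I κ : ℕ → Ω → ℝ) (ℓ : ℕ) (ω : Ω) : ℝ :=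
  (I ℓ ω - I (ℓ + 1) ω) * (κ (ℓ + 1) ω - κ 1 ω)

theorem slack_nonneg (hI : ∀ ω, I (ℓ + 1) ω ≤ I ℓ ω)
    (hκ1 : ∀ ω, min (γ ω) (κ (ℓ + 1) ω) = κ 1 ω) : 0 ≤ slack I κ ℓ := fun ω => by
  rw [slack, ← hκ1 ω]
  exact mul_nonneg (sub_nonneg.2 (hI ω)) (sub_nonneg.2 (min_le_right _ _))

theorem support_slack (hI01 : ∀ j ω, I j ω = 0 ∨ I j ω = 1) (hI : ∀ ω, I (ℓ + 1) ω ≤ I ℓ ω)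
    (hκ1 : ∀ ω, min (γ ω) (κ (ℓ + 1) ω) = κ 1 ω) :
    Function.support (slack I κ ℓ) = {ω | I ℓ ω = 1 ∧ I (ℓ + 1) ω = 0 ∧ γ ω < κ (ℓ + 1) ω} := by
  ext ω
  rw [Function.mem_support, Set.mem_ofPred_eq, slack, ← hκ1 ω]
  exact sub_mul_sub_min_ne_zero_iff (hI01 ℓ ω) (hI01 (ℓ + 1) ω) (hI ω)

variable [MeasurableSpace Ω] {μ : Measure Ω}

theorem integrable_slack (hI : AEStronglyMeasurable (I ℓ) μ)
    (hI' : AEStronglyMeasurable (I (ℓ + 1)) μ) (hIbdd : ∀ j ω, ‖I j ω‖ ≤ 1)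
    (hκ : Integrable (κ (ℓ + 1)) μ) (hκ1 : Integrable (κ 1) μ) :
    Integrable (slack I κ ℓ) μ :=
  (hκ.sub hκ1).bdd_mul (hI.sub hI') (c := 2) <| ae_of_all _ fun ω =>
    (norm_sub_le _ _).trans (by linarith [hIbdd ℓ ω, hIbdd (ℓ + 1) ω])

theorem integral_slack_eq_zero_iff (hint : Integrable (slack I κ ℓ) μ)
    (hI01 : ∀ j ω, I j ω = 0 ∨ I j ω = 1) (hI : ∀ ω, I (ℓ + 1) ω ≤ I ℓ ω)
    (hκ1 : ∀ ω, min (γ ω) (κ (ℓ + 1) ω) = κ 1 ω) :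
    ∫ ω, slack I κ ℓ ω ∂μ = 0 ↔
      μ {ω | I ℓ ω = 1 ∧ I (ℓ + 1) ω = 0 ∧ γ ω < κ (ℓ + 1) ω} = 0 := by
  rw [integral_eq_zero_iff_of_nonneg (slack_nonneg hI hκ1) hint,
    ← Measure.measure_support_eq_zero_iff μ, support_slack hI01 hI hκ1]

theorem integral_mul_sub_sum_eq_by_parts {d : ℕ} {c : ℕ → ℝ}
    (htop : Integrable (fun ω => I (d + 1) ω * κ 1 ω) μ)
    (hgain : ∀ ℓ ∈ Finset.Icc 1 d,
      Integrable (fun ω => I ℓ ω * (κ (ℓ + 1) ω - κ ℓ ω - c ℓ)) μ)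
    (hslack : ∀ ℓ ∈ Finset.Icc 1 d, Integrable (slack I κ ℓ) μ) :
    ∫ ω, (I (d + 1) ω * κ (d + 1) ω - ∑ ℓ ∈ Finset.Icc 1 d, I ℓ ω * c ℓ) ∂μ =
      ∫ ω, I (d + 1) ω * κ 1 ω ∂μ
        + ∑ ℓ ∈ Finset.Icc 1 d, ∫ ω, I ℓ ω * (κ (ℓ + 1) ω - κ ℓ ω - c ℓ) ∂μ
        - ∑ ℓ ∈ Finset.Icc 1 d, ∫ ω, slack I κ ℓ ω ∂μ := by
  have hgain_sum := integrable_finsetSum _ hgain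
  have hslack_sum := integrable_finsetSum _ hslack
  calc _ = ∫ ω, (I (d + 1) ω * κ 1 ω
          + ∑ ℓ ∈ Finset.Icc 1 d, I ℓ ω * (κ (ℓ + 1) ω - κ ℓ ω - c ℓ)
          - ∑ ℓ ∈ Finset.Icc 1 d, slack I κ ℓ ω) ∂μ := by
        congr 1
        funext ω
        have := Finset.sum_Icc_mul_sub_by_parts (fun ℓ => I ℓ ω) (fun ℓ => κ ℓ ω) d
        simp only [slack, mul_sub, Finset.sum_sub_distrib] at this ⊢
        linarith
    _ = _ := by
      rw [integral_sub, integral_add htop hgain_sum, integral_finsetSum _ hgain,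
        integral_finsetSum _ hslack]
      exacts [htop.add hgain_sum, hslack_sum]

end Slack

theorem nested_key_lemma_general
    {Ω : Type*} [m0 : MeasurableSpace Ω] (μ : Measure Ω) [IsProbabilityMeasure μ]
    (d : ℕ) (𝒢 : ℕ → MeasurableSpace Ω) (h𝒢 : ∀ ℓ, 𝒢 ℓ ≤ m0)
    (σidx κ γ : ℕ → Ω → ℝ) (v A : Ω → ℝ) (I : ℕ → Ω → ℝ) (c : ℕ → ℝ)
    (hκtop : κ (d + 1) = v)
    (hκ : ∀ ℓ, 1 ≤ ℓ → ℓ ≤ d → κ ℓ = fun ω => min (σidx ℓ ω) (κ (ℓ + 1) ω))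
    (hγ1 : γ 1 = σidx 1)
    (hγ : ∀ ℓ, 1 ≤ ℓ → ℓ + 1 ≤ d → γ (ℓ + 1) = fun ω => min (γ ℓ ω) (σidx (ℓ + 1) ω))
    (hσ : ∀ ℓ, 1 ≤ ℓ → ℓ ≤ d →
      (μ[(fun ω => max (κ (ℓ + 1) ω - σidx ℓ ω) 0) | 𝒢 ℓ]) =ᵐ[μ] fun _ => c ℓ)
    (hImeas : ∀ ℓ, 1 ≤ ℓ → ℓ ≤ d → Measurable[𝒢 ℓ] (I ℓ))
    (hI01 : ∀ ℓ ω, I ℓ ω = 0 ∨ I ℓ ω = 1)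
    (hchain : ∀ ℓ, 1 ≤ ℓ → ℓ ≤ d → ∀ ω, I (ℓ + 1) ω ≤ I ℓ ω)
    (hItop : I (d + 1) = A)
    (hAmeas : Measurable A)
    (hκint : ∀ ℓ, 1 ≤ ℓ → ℓ ≤ d + 1 → Integrable (κ ℓ) μ) :
    (∫ ω, (A ω * v ω - ∑ ℓ ∈ Finset.Icc 1 d, I ℓ ω * c ℓ) ∂μ ≤
        ∫ ω, A ω * κ 1 ω ∂μ) ∧
    ((∫ ω, (A ω * v ω - ∑ ℓ ∈ Finset.Icc 1 d, I ℓ ω * c ℓ) ∂μ =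
        ∫ ω, A ω * κ 1 ω ∂μ) ↔
      ∀ ℓ, 1 ≤ ℓ → ℓ ≤ d →
        μ {ω | I ℓ ω = 1 ∧ I (ℓ + 1) ω = 0 ∧ γ ℓ ω < κ (ℓ + 1) ω} = 0) := by
  subst hItop hκtop
  have hIbdd : ∀ ℓ ω, ‖I ℓ ω‖ ≤ 1 := fun ℓ ω => by rcases hI01 ℓ ω with h | h <;> simp [h]
  have hIsm : ∀ ℓ, 1 ≤ ℓ → ℓ ≤ d + 1 → AEStronglyMeasurable (I ℓ) μ := by
    intro ℓ h1 h2
    rcases h2.lt_or_eq with h2 | rfl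
    · exact ((hImeas ℓ h1 (by omega)).mono (h𝒢 ℓ) le_rfl).aestronglyMeasurable
    · exact hAmeas.aestronglyMeasurable
  have hκ1 : ∀ ℓ, 1 ≤ ℓ → ℓ ≤ d → ∀ ω, min (γ ℓ ω) (κ (ℓ + 1) ω) = κ 1 ω := fun ℓ h1 h2 ω =>
    min_prefixMin_suffixMin_eq (σ := (σidx · ω)) (γ := (γ · ω))
      (fun ℓ h1 h2 => congrFun (hκ ℓ h1 h2) ω) (congrFun hγ1 ω)
      (fun ℓ h1 h2 => congrFun (hγ ℓ h1 h2) ω) ℓ h1 h2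
  have hgain : ∀ ℓ ∈ Finset.Icc 1 d,
      Integrable (fun ω => I ℓ ω * (κ (ℓ + 1) ω - κ ℓ ω - c ℓ)) μ ∧
        ∫ ω, I ℓ ω * (κ (ℓ + 1) ω - κ ℓ ω - c ℓ) ∂μ = 0 := by
    intro ℓ hℓ
    obtain ⟨h1, h2⟩ := Finset.mem_Icc.1 hℓ
    have hΔint := (hκint (ℓ + 1) (by omega) (by omega)).sub (hκint ℓ h1 (by omega))
    have hΔ : (fun ω => κ (ℓ + 1) ω - κ ℓ ω) = fun ω => max (κ (ℓ + 1) ω - σidx ℓ ω) 0 := by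
      funext ω
      rw [hκ ℓ h1 h2, ← max_sub_sub_left, sub_self]
    exact ⟨(hΔint.sub (integrable_const (c ℓ))).bdd_mul (hIsm ℓ h1 (by omega))
        (ae_of_all _ (hIbdd ℓ)),
      integral_mul_sub_eq_zero_of_condExp_eq_const (h𝒢 ℓ) (hImeas ℓ h1 h2).stronglyMeasurable
        (hIbdd ℓ) hΔint (hΔ ▸ hσ ℓ h1 h2)⟩
  have hslack : ∀ ℓ ∈ Finset.Icc 1 d, Integrable (slack I κ ℓ) μ := fun ℓ hℓ =>
    have ⟨h1, h2⟩ := Finset.mem_Icc.1 hℓ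
    integrable_slack (hIsm ℓ h1 (by omega)) (hIsm (ℓ + 1) (by omega) (by omega)) hIbdd
      (hκint (ℓ + 1) (by omega) (by omega)) (hκint 1 le_rfl (by omega))
  have htop := (hκint 1 le_rfl (by omega)).bdd_mul (hIsm (d + 1) (by omega) le_rfl)
    (ae_of_all _ (hIbdd (d + 1)))
  rw [integral_mul_sub_sum_eq_by_parts htop (fun ℓ hℓ => (hgain ℓ hℓ).1) hslack,
    Finset.sum_eq_zero fun ℓ hℓ => (hgain ℓ hℓ).2, add_zero]
  simpa only [Finset.mem_Icc, and_imp] using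
    Finset.sub_sum_le_self_and_eq_self_iff _ fun ℓ hℓ =>
      have ⟨h1, h2⟩ := Finset.mem_Icc.1 hℓ
      ⟨integral_nonneg (slack_nonneg (hchain ℓ h1 h2) (hκ1 ℓ h1 h2)),
        integral_slack_eq_zero_iff (hslack ℓ hℓ) hI01 (hchain ℓ h1 h2) (hκ1 ℓ h1 h2)⟩

/-- The nested-box amortization lemma: for any algorithm (inspection indicators
`I (d+1) ≤ I d ≤ ⋯ ≤ I 1` with `I ℓ` decided before observing signal `s^(ℓ)`, i.e.
`𝒢 ℓ`-measurable, and `A = I (d+1)` the claiming indicator), the expected welfare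
contribution of the basket satisfies `E[A·v - ∑ I ℓ · c ℓ] ≤ E[A · κ 1]`, with
equality iff the algorithm is non-exposed: almost surely, for every `ℓ`, if box `ℓ`
is the last advanced stage (`I ℓ = 1`, `I (ℓ+1) = 0`) then `κ (ℓ+1) ≤ γ ℓ`. -/
theorem nested_key_lemma
    {Ω : Type*} [m0 : MeasurableSpace Ω] (μ : Measure Ω) [IsProbabilityMeasure μ]
    (d : ℕ) (𝒢 : ℕ → MeasurableSpace Ω) (h𝒢 : ∀ ℓ, 𝒢 ℓ ≤ m0)
    (σidx κ γ : ℕ → Ω → ℝ) (v A : Ω → ℝ) (I : ℕ → Ω → ℝ) (c : ℕ → ℝ)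
    (hκtop : κ (d + 1) = v)
    (hκ : ∀ ℓ, 1 ≤ ℓ → ℓ ≤ d → κ ℓ = fun ω => min (σidx ℓ ω) (κ (ℓ + 1) ω))
    (hγ1 : γ 1 = σidx 1)
    (hγ : ∀ ℓ, 1 ≤ ℓ → ℓ + 1 ≤ d → γ (ℓ + 1) = fun ω => min (γ ℓ ω) (σidx (ℓ + 1) ω))
    (hσmeas : ∀ ℓ, Measurable (σidx ℓ)) (hκmeas : ∀ ℓ, Measurable (κ ℓ))
    (hσ : ∀ ℓ, 1 ≤ ℓ → ℓ ≤ d →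
      (μ[(fun ω => max (κ (ℓ + 1) ω - σidx ℓ ω) 0) | 𝒢 ℓ]) =ᵐ[μ] fun _ => c ℓ)
    (hImeas : ∀ ℓ, 1 ≤ ℓ → ℓ ≤ d → Measurable[𝒢 ℓ] (I ℓ))
    (hI01 : ∀ ℓ ω, I ℓ ω = 0 ∨ I ℓ ω = 1)
    (hchain : ∀ ℓ, 1 ≤ ℓ → ℓ ≤ d → ∀ ω, I (ℓ + 1) ω ≤ I ℓ ω)
    (hItop : I (d + 1) = A)
    (hAmeas : Measurable A)
    (hvint : Integrable v μ)
    (hκint : ∀ ℓ, 1 ≤ ℓ → ℓ ≤ d + 1 → Integrable (κ ℓ) μ) :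
    (∫ ω, (A ω * v ω - ∑ ℓ ∈ Finset.Icc 1 d, I ℓ ω * c ℓ) ∂μ ≤
        ∫ ω, A ω * κ 1 ω ∂μ) ∧
    ((∫ ω, (A ω * v ω - ∑ ℓ ∈ Finset.Icc 1 d, I ℓ ω * c ℓ) ∂μ =
        ∫ ω, A ω * κ 1 ω ∂μ) ↔
      ∀ ℓ, 1 ≤ ℓ → ℓ ≤ d →
        μ {ω | I ℓ ω = 1 ∧ I (ℓ + 1) ω = 0 ∧ γ ℓ ω < κ (ℓ + 1) ω} = 0) :=
  nested_key_lemma_general (m0 := m0) μ d 𝒢 h𝒢 σidx κ γ v A I c hκtop hκ hγ1 hγ hσ hImeas hI01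
    hchain hItop hAmeas hκint
end

section
/- Any descending procedure for nested Pandora baskets satisfies the invariant: at every step t, the basket i it advances has maximal γ_i^t among eligible baskets, and every other eligible basket j satisfies γ_j^t = σ_j^t. -/
/-- `gammaCur σ stage i t` is the minimum of the Weitzman indices of the boxes of
basket `i` opened so far (stages `1, …, stage i t`) together with the current index
`σ i (stage i t + 1)`. -/
noncomputable def gammaCur {ι : Type*} (σ : ι → ℕ → ℝ) (stage : ι → ℕ → ℕ)
    (i : ι) (t : ℕ) : ℝ :=
  (Finset.Icc 1 (stage i t + 1)).inf' (Finset.nonempty_Icc.mpr (by omega)) (σ i)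

/-- The descending-procedure invariant: a descending procedure (nonincreasing
eligible set; at every step it advances the eligible basket with the largest current
Weitzman index `σ i (stage i t + 1)`; the just-advanced basket stays eligible) always
advances an eligible basket with maximal `γ`, and every other eligible basket `j`
satisfies `γ_j = σ_j` (its running minimum equals its current index). -/
theorem descending_invariant
    {ι : Type*} [DecidableEq ι]
    (σ : ι → ℕ → ℝ) (eligible : ℕ → Finset ι) (advance : ℕ → ι)
    (stage : ι → ℕ → ℕ)
    (hstage0 : ∀ i, stage i 0 = 0)
    (hmem : ∀ t, advance t ∈ eligible t)
    (hmono : ∀ t, eligible (t + 1) ⊆ eligible t)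
    (hkeep : ∀ t, advance t ∈ eligible (t + 1))
    (hmax : ∀ t, ∀ j ∈ eligible t,
      σ j (stage j t + 1) ≤ σ (advance t) (stage (advance t) t + 1))
    (hstep : ∀ t, stage (advance t) (t + 1) = stage (advance t) t + 1)
    (hfix : ∀ t, ∀ j, j ≠ advance t → stage j (t + 1) = stage j t) :
    ∀ t, (∀ j ∈ eligible t, gammaCur σ stage j t ≤ gammaCur σ stage (advance t) t) ∧
      (∀ j ∈ eligible t, j ≠ advance t →
        gammaCur σ stage j t = σ j (stage j t + 1)) := by

  intro t
  induction t with
  | zero =>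
    have hg0 : ∀ i, gammaCur σ stage i 0 = σ i 1 := by
      intro i
      simp [gammaCur, hstage0]
    constructor
    · intro j hj
      rw [hg0, hg0]
      have := hmax 0 j hj
      rwa [hstage0, hstage0] at this
    · intro j _ _
      rw [hg0, hstage0]
  | succ t ih =>
    have hfixγ : ∀ j, j ≠ advance t →
        gammaCur σ stage j (t+1) = gammaCur σ stage j t := by
      intro j hj
      simp [gammaCur, hfix t j hj]
    have hIcc : Finset.Icc 1 (stage (advance t) t + 1 + 1)
        = insert (stage (advance t) t + 1 + 1) (Finset.Icc 1 (stage (advance t) t + 1)) := by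
      ext x; simp [Finset.mem_Icc]; omega
    have hγa : gammaCur σ stage (advance t) (t+1)
        = min (σ (advance t) (stage (advance t) t + 1 + 1)) (gammaCur σ stage (advance t) t) := by
      unfold gammaCur
      simp_rw [hstep t]
      rw [Finset.inf'_congr _ hIcc (fun _ _ => rfl), Finset.inf'_insert]
    have hsec : ∀ j ∈ eligible (t+1), j ≠ advance (t+1) →
        gammaCur σ stage j (t+1) = σ j (stage j (t+1) + 1) := by
      intro j hj hj'
      by_cases hja : j = advance t
      · subst hja
        rw [hγa, hstep t]
        have hba : advance (t+1) ≠ advance t := fun h => hj' h.symm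
        have hbel : advance (t+1) ∈ eligible t := hmono t (hmem (t+1))
        have h1 : σ (advance t) (stage (advance t) t + 1 + 1)
            ≤ gammaCur σ stage (advance t) t := by
          have h := hmax (t+1) (advance t) hj
          rw [hstep t, hfix t (advance (t+1)) hba] at h
          calc σ (advance t) (stage (advance t) t + 1 + 1)
              ≤ σ (advance (t+1)) (stage (advance (t+1)) t + 1) := h
            _ = gammaCur σ stage (advance (t+1)) t := (ih.2 _ hbel hba).symm
            _ ≤ gammaCur σ stage (advance t) t := ih.1 _ hbel
        exact min_eq_left h1
      · rw [hfixγ j hja, hfix t j hja, ih.2 j (hmono t hj) hja]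
    refine ⟨?_, hsec⟩
    intro j hj
    by_cases hba : advance (t+1) = advance t
    · rw [hba, hγa]
      by_cases hja : j = advance t
      · subst hja
        rw [hγa]
      · rw [hfixγ j hja]
        refine le_min ?_ (ih.1 j (hmono t hj))
        have h := hmax (t+1) j hj
        rw [hba, hstep t, hfix t j hja] at h
        rw [ih.2 j (hmono t hj) hja]
        exact h
    · have hγb : gammaCur σ stage (advance (t+1)) (t+1)
          = σ (advance (t+1)) (stage (advance (t+1)) (t+1) + 1) := by
        rw [hfixγ _ hba, hfix t _ hba,
          ih.2 _ (hmono t (hmem (t+1))) hba]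
      by_cases hjb : j = advance (t+1)
      · subst hjb; exact le_refl _
      · rw [hsec j hj hjb, hγb]
        exact hmax (t+1) j hj
end

section
/- For the bundled star graph with n leaves, any bundled-box algorithm has expected welfare at most 1, while the asynchronous algorithm that inspects all of u's boxes and completes any edge with v_{u,w_i} = n obtains expected welfare at least n(1 - 1/e) - 1; hence bundled-box algorithms are at best an O(1/n)-approximation. -/
/-! On edge `i` the decision `I i` to open the combined box is independent of `v i`, whose mean
is `1`. So the value collected on claimed edges, `E[A i (v i + 1)] ≤ E[I i v i] + E[A i] =
E[I i] + E[A i]`, is eaten by the inspection cost `E[I i] (1 + 1/n)` up to `E[A i]`, and the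
matching constraint bounds `∑ E[A i]` by `1`. The asynchronous algorithm instead finds some
`v i = n` with probability `1 - (1 - 1/n)^n ≥ 1 - 1/e`, by independence. -/

open MeasureTheory ProbabilityTheory

section

variable {Ω : Type*} [MeasurableSpace Ω] {μ : Measure Ω}

lemma integrable_of_eq_zero_or_eq [IsFiniteMeasure μ] {f : Ω → ℝ} {c : ℝ} (hf : Measurable f)
    (h : ∀ ω, f ω = 0 ∨ f ω = c) : Integrable f μ :=
  (integrable_const |c|).mono' hf.aestronglyMeasurable
    (ae_of_all _ fun ω => by rcases h ω with h | h <;> simp [h])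

lemma integral_eq_measureReal_mul_of_eq_zero_or_eq {f : Ω → ℝ} {c : ℝ} (hf : Measurable f)
    (h : ∀ ω, f ω = 0 ∨ f ω = c) : ∫ ω, f ω ∂μ = μ.real {ω | f ω = c} * c := by
  have hf_eq : f = {ω | f ω = c}.indicator fun _ => c := by
    funext ω
    by_cases hω : f ω = c
    · simp [hω]
    · simpa [hω] using (h ω).resolve_right hω
  conv_lhs => rw [hf_eq]
  exact integral_indicator_const c (hf (measurableSet_singleton c))

section BundledEdge

variable {A I v : Ω → ℝ}

lemma integrable_mul_add_one_of_le_of_indepFun (hA : Integrable A μ) (hI : Integrable I μ)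
    (hv : Integrable v μ) (hIv : IndepFun I v μ) (hA_nonneg : ∀ ω, 0 ≤ A ω)
    (hAI : ∀ ω, A ω ≤ I ω) (hv_nonneg : ∀ ω, 0 ≤ v ω) :
    Integrable (fun ω => A ω * (v ω + 1)) μ := by
  refine ((hIv.integrable_mul hI hv).add hA).mono'
    (hA.1.mul (hv.1.add aestronglyMeasurable_const)) (ae_of_all _ fun ω => ?_)
  have hAv := mul_le_mul_of_nonneg_right (hAI ω) (hv_nonneg ω)
  rw [Real.norm_of_nonneg (mul_nonneg (hA_nonneg ω) (by linarith [hv_nonneg ω]))]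
  simp only [Pi.add_apply, Pi.mul_apply]
  linarith

lemma integral_mul_add_one_sub_le (hA : Integrable A μ) (hI : Integrable I μ)
    (hv : Integrable v μ) (hIv : IndepFun I v μ) (hA_nonneg : ∀ ω, 0 ≤ A ω)
    (hAI : ∀ ω, A ω ≤ I ω) (hv_nonneg : ∀ ω, 0 ≤ v ω) (hmean : ∫ ω, v ω ∂μ ≤ 1)
    {c : ℝ} (hc : 0 ≤ c) :
    ∫ ω, (A ω * (v ω + 1) - I ω * (1 + c)) ∂μ ≤ ∫ ω, A ω ∂μ := by
  have hgain := integrable_mul_add_one_of_le_of_indepFun hA hI hv hIv hA_nonneg hAI hv_nonneg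
  have hIv_int : Integrable (fun ω => I ω * v ω) μ := hIv.integrable_mul hI hv
  have hgain_le : ∫ ω, A ω * (v ω + 1) ∂μ ≤ ∫ ω, I ω * v ω ∂μ + ∫ ω, A ω ∂μ := by
    rw [← integral_add hIv_int hA]
    refine integral_mono hgain (hIv_int.add hA) fun ω => ?_
    have := mul_le_mul_of_nonneg_right (hAI ω) (hv_nonneg ω)
    simp only
    linarith
  have hIv_eq : ∫ ω, I ω * v ω ∂μ = (∫ ω, I ω ∂μ) * ∫ ω, v ω ∂μ :=
    hIv.integral_mul_eq_mul_integral hI.1 hv.1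
  have hI_nonneg : 0 ≤ ∫ ω, I ω ∂μ := integral_nonneg fun ω => (hA_nonneg ω).trans (hAI ω)
  rw [integral_sub hgain (hI.mul_const _), integral_mul_const]
  nlinarith [mul_le_mul_of_nonneg_left hmean hI_nonneg]

end BundledEdge

lemma integral_sum_mul_add_one_sub_le_one [IsProbabilityMeasure μ] {ι : Type*} [Fintype ι]
    {A I v : ι → Ω → ℝ} (hA : ∀ i, Integrable (A i) μ) (hI : ∀ i, Integrable (I i) μ)
    (hv : ∀ i, Integrable (v i) μ) (hIv : ∀ i, IndepFun (I i) (v i) μ)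
    (hA_nonneg : ∀ i ω, 0 ≤ A i ω) (hAI : ∀ i ω, A i ω ≤ I i ω) (hv_nonneg : ∀ i ω, 0 ≤ v i ω)
    (hmean : ∀ i, ∫ ω, v i ω ∂μ ≤ 1) (hmatch : ∀ ω, ∑ i, A i ω ≤ 1) {c : ℝ} (hc : 0 ≤ c) :
    ∫ ω, ∑ i, (A i ω * (v i ω + 1) - I i ω * (1 + c)) ∂μ ≤ 1 := by
  have hterm i : Integrable (fun ω => A i ω * (v i ω + 1) - I i ω * (1 + c)) μ :=
    (integrable_mul_add_one_of_le_of_indepFun (hA i) (hI i) (hv i) (hIv i) (hA_nonneg i) (hAI i)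
      (hv_nonneg i)).sub ((hI i).mul_const _)
  calc ∫ ω, ∑ i, (A i ω * (v i ω + 1) - I i ω * (1 + c)) ∂μ
      = ∑ i, ∫ ω, (A i ω * (v i ω + 1) - I i ω * (1 + c)) ∂μ :=
        integral_finsetSum _ fun i _ => hterm i
    _ ≤ ∑ i, ∫ ω, A i ω ∂μ := Finset.sum_le_sum fun i _ =>
        integral_mul_add_one_sub_le (hA i) (hI i) (hv i) (hIv i) (hA_nonneg i) (hAI i)
          (hv_nonneg i) (hmean i) hc
    _ = ∫ ω, ∑ i, A i ω ∂μ := (integral_finsetSum _ fun i _ => hA i).symm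
    _ ≤ 1 := by
        simpa using integral_mono (integrable_finsetSum _ fun i _ => hA i) (integrable_const 1)
          hmatch

lemma measureReal_exists_mem_of_iIndepFun [IsProbabilityMeasure μ] {ι β : Type*} [Fintype ι]
    [MeasurableSpace β] {X : ι → Ω → β} (hX : iIndepFun X μ) (hX_meas : ∀ i, Measurable (X i))
    {s : Set β} (hs : MeasurableSet s) {p : ℝ} (hp : ∀ i, μ.real (X i ⁻¹' s) = p) :
    μ.real {ω | ∃ i, X i ω ∈ s} = 1 - (1 - p) ^ Fintype.card ι := by
  have hcompl : {ω | ∃ i, X i ω ∈ s}ᶜ = ⋂ i, X i ⁻¹' sᶜ := by ext; simp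
  have hmiss i : μ.real (X i ⁻¹' sᶜ) = 1 - p := by
    rw [Set.preimage_compl, measureReal_compl (hX_meas i hs), probReal_univ, hp]
  have hnone : μ.real (⋂ i, X i ⁻¹' sᶜ) = (1 - p) ^ Fintype.card ι := by
    rw [measureReal_def, hX.meas_iInter fun i => ⟨sᶜ, hs.compl, rfl⟩, ENNReal.toReal_prod]
    simp only [← measureReal_def, hmiss, Finset.prod_const, Finset.card_univ]
  have hmeas : MeasurableSet {ω | ∃ i, X i ω ∈ s} := by
    rw [Set.ofPred_exists]
    exact .iUnion fun i => hX_meas i hs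
  rw [← hnone, ← hcompl, measureReal_compl hmeas, probReal_univ]
  ring

end

/-- Failure of bundled-box algorithms on the bundled star graph: center `u`, leaves
`w_1,…,w_n`; box `(w_i, u)` has value `1` and cost `1`; box `(u, w_i)` has cost
`1/n` and value `n` with probability `1/n` (else `0`), independently.
(1) Any bundled-box algorithm — modeled by 0/1 inspection indicators `I i`
(inspect both boxes of edge `i` at combined cost `1 + 1/n` for combined value
`v i + 1`, with `I i` independent of `v i`) and claiming indicators `A i ≤ I i`
forming a matching (`∑ A_i ≤ 1`) — has expected welfare at most `1`.
(2) The asynchronous algorithm that inspects all of `u`'s boxes (total cost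
`n · (1/n) = 1`) and completes any edge with `v_{u,w_i} = n` (paying `1`, gaining
`n + 1`) has expected welfare at least `n(1 - 1/e) - 1`. -/
theorem bundled_star_graph
    {Ω : Type*} [MeasurableSpace Ω] (μ : Measure Ω) [IsProbabilityMeasure μ]
    (n : ℕ) (hn : 0 < n) (v : Fin n → Ω → ℝ)
    (hmeas : ∀ i, Measurable (v i))
    (hval : ∀ i ω, v i ω = 0 ∨ v i ω = n)
    (hprob : ∀ i, μ {ω | v i ω = n} = 1 / n)
    (hindep : ProbabilityTheory.iIndepFun v μ) :
    (∀ A I : Fin n → Ω → ℝ,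
      (∀ i, Measurable (A i)) → (∀ i, Measurable (I i)) →
      (∀ i ω, A i ω = 0 ∨ A i ω = 1) → (∀ i ω, I i ω = 0 ∨ I i ω = 1) →
      (∀ i ω, A i ω ≤ I i ω) → (∀ ω, ∑ i, A i ω ≤ 1) →
      (∀ i, ProbabilityTheory.IndepFun (I i) (v i) μ) →
      ∫ ω, (∑ i, (A i ω * (v i ω + 1) - I i ω * (1 + 1 / n))) ∂μ ≤ 1) ∧
    ((n : ℝ) * (1 - Real.exp (-1)) - 1 ≤
      (∫ ω, (if ∃ i, v i ω = (n : ℝ) then (n : ℝ) else 0) ∂μ) - 1) := by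
  have hprob_real i : μ.real {ω | v i ω = n} = 1 / n := by
    rw [measureReal_def, hprob i, ENNReal.toReal_div]
    simp
  have hmean i : ∫ ω, v i ω ∂μ = 1 := by
    rw [integral_eq_measureReal_mul_of_eq_zero_or_eq (hmeas i) (hval i), hprob_real i]
    field_simp
  refine ⟨fun A I hA_meas hI_meas hA01 hI01 hAI hmatch hIv => ?_, ?_⟩
  · exact integral_sum_mul_add_one_sub_le_one
      (fun i => integrable_of_eq_zero_or_eq (hA_meas i) (hA01 i))
      (fun i => integrable_of_eq_zero_or_eq (hI_meas i) (hI01 i))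
      (fun i => integrable_of_eq_zero_or_eq (hmeas i) (hval i)) hIv
      (fun i ω => by rcases hA01 i ω with h | h <;> simp [h]) hAI
      (fun i ω => by rcases hval i ω with h | h <;> simp [h]) (fun i => (hmean i).le) hmatch
      (by positivity)
  · have hE : MeasurableSet {ω | ∃ i, v i ω = n} := by
      rw [Set.ofPred_exists]
      exact .iUnion fun i => hmeas i (measurableSet_singleton _)
    have hwelfare : ∫ ω, (if ∃ i, v i ω = (n : ℝ) then (n : ℝ) else 0) ∂μ
        = μ.real {ω | ∃ i, v i ω = n} * n := by
      rw [← smul_eq_mul, ← integral_indicator_const _ hE]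
      simp only [Set.indicator_apply, Set.mem_ofPred_eq]
    have hsuccess : μ.real {ω | ∃ i, v i ω = n} = 1 - (1 - 1 / n) ^ n := by
      simpa only [Fintype.card_fin, Set.mem_singleton_iff] using measureReal_exists_mem_of_iIndepFun hindep hmeas (measurableSet_singleton _)
        hprob_real
    have hexp := Real.one_sub_div_pow_le_exp_neg (n := n) (t := 1) (by exact_mod_cast hn)
    rw [hwelfare, hsuccess, mul_comm _ (n : ℝ)]
    gcongr
end

section
/- For any orientation O of the graph and any O-oriented algorithm for Pandora's Matching Problem, the expected welfare is at most E[Σ_{(i,j) ∈ O} A_{ij} κ_{ij}^(1)], where κ_{ij}^(1) is the capped value of the two-stage nested basket for oriented edge (i,j), and A_{ij} the indicator edge {i,j} is matched. -/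
/-!
Fix an oriented edge, i.e. a nested basket with total value `S`, inner index `σ₂` and outer
index `σ₁`. The payments `I₁ c₁` and `I₂ c₂` have the same expectations as `I₁ (K - σ₁)⁺` and
`I₂ (S - σ₂)⁺`, where `K = min σ₂ S`: the first because `I₁` is independent of `K`, the second
because `I₂` is known once the first box is open and `(S - σ₂)⁺` has conditional mean `c₂`.
Since `S - (S - σ₂)⁺ - (K - σ₁)⁺ = min σ₁ K = κ` and `A ≤ I₂ ≤ I₁`, the amortized welfare
`A S - I₁ (K - σ₁)⁺ - I₂ (S - σ₂)⁺` is pointwise at most `A κ`. Summing over the edges of `O`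
gives the bound.
-/

open MeasureTheory ProbabilityTheory

lemma min_eq_sub_max_sub_zero {α : Type*} [AddCommGroup α] [LinearOrder α]
    [IsOrderedAddMonoid α] (x y : α) : min x y = y - max (y - x) 0 := by
  rcases le_total x y with h | h
  · simp [h, sub_nonneg.2 h]
  · simp [h, sub_nonpos.2 h]

lemma nested_min_eq_sub_surplus (σ₁ σ₂ s : ℝ) :
    min σ₁ (min σ₂ s) = s - max (s - σ₂) 0 - max (min σ₂ s - σ₁) 0 := by
  rw [min_eq_sub_max_sub_zero σ₁, min_eq_sub_max_sub_zero σ₂ s]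

lemma mul_sub_mul_sub_mul_le {a i₁ i₂ s f₁ f₂ : ℝ} (h₁ : a ≤ i₁) (h₂ : a ≤ i₂)
    (hf₁ : 0 ≤ f₁) (hf₂ : 0 ≤ f₂) :
    a * s - i₁ * f₁ - i₂ * f₂ ≤ a * (s - f₂ - f₁) := by
  nlinarith

section

variable {Ω : Type*} {m m₀ : MeasurableSpace Ω} {μ : Measure Ω}

lemma MeasureTheory.Integrable.zero_or_one_mul {I f : Ω → ℝ} (hf : Integrable f μ)
    (hI : AEStronglyMeasurable I μ) (hI01 : ∀ ω, I ω = 0 ∨ I ω = 1) :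
    Integrable (fun ω => I ω * f ω) μ :=
  hf.bdd_mul hI (c := 1) <| ae_of_all _ fun ω => by rcases hI01 ω with h | h <;> simp [h]

lemma integral_mul_const_eq_of_indepFun {I f : Ω → ℝ} {c : ℝ} (hIf : IndepFun I f μ)
    (hI : AEStronglyMeasurable I μ) (hf : AEStronglyMeasurable f μ) (hc : ∫ ω, f ω ∂μ = c) :
    ∫ ω, I ω * c ∂μ = ∫ ω, I ω * f ω ∂μ := by
  rw [integral_mul_const, ← hc]
  exact (hIf.integral_mul_eq_mul_integral hI hf).symm

lemma integral_mul_const_eq_of_condExp_eq [IsFiniteMeasure μ]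
    (hm : m ≤ m₀) {I f : Ω → ℝ} {c : ℝ} (hI : StronglyMeasurable[m] I)
    (hIf : Integrable (I * f) μ) (hf : Integrable f μ) (hc : μ[f | m] =ᵐ[μ] fun _ => c) :
    ∫ ω, I ω * c ∂μ = ∫ ω, I ω * f ω ∂μ := by
  calc ∫ ω, I ω * c ∂μ = ∫ ω, (μ[I * f | m]) ω ∂μ := by
        refine integral_congr_ae ?_
        filter_upwards [condExp_mul_of_stronglyMeasurable_left hI hIf hf, hc] with ω hIfω hcω
        simp [hIfω, hcω]
    _ = ∫ ω, I ω * f ω ∂μ := integral_condExp hm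

lemma integral_welfare_le_integral_mul_nested_min [IsFiniteMeasure μ] (hm : m ≤ m₀)
    {S σ₂ A I₁ I₂ : Ω → ℝ} {σ₁ c₁ c₂ : ℝ}
    (hS : Integrable S μ) (hσ₂ : Integrable σ₂ μ)
    (hc₁ : ∫ ω, max (min (σ₂ ω) (S ω) - σ₁) 0 ∂μ = c₁)
    (hc₂ : μ[fun ω => max (S ω - σ₂ ω) 0 | m] =ᵐ[μ] fun _ => c₂)
    (hI₁indep : IndepFun I₁ (fun ω => min (σ₂ ω) (S ω)) μ)
    (hA : Measurable A) (hI₁ : Measurable I₁) (hI₂ : Measurable[m] I₂)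
    (hA01 : ∀ ω, A ω = 0 ∨ A ω = 1) (hI₁01 : ∀ ω, I₁ ω = 0 ∨ I₁ ω = 1)
    (hI₂01 : ∀ ω, I₂ ω = 0 ∨ I₂ ω = 1) (hAI₁ : ∀ ω, A ω ≤ I₁ ω) (hAI₂ : ∀ ω, A ω ≤ I₂ ω) :
    ∫ ω, (A ω * S ω - I₁ ω * c₁ - I₂ ω * c₂) ∂μ ≤
      ∫ ω, A ω * min σ₁ (min (σ₂ ω) (S ω)) ∂μ := by
  set f₁ : Ω → ℝ := fun ω => max (min (σ₂ ω) (S ω) - σ₁) 0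
  set f₂ : Ω → ℝ := fun ω => max (S ω - σ₂ ω) 0
  have hK : Integrable (fun ω => min (σ₂ ω) (S ω)) μ := hσ₂.inf hS
  have hf₁ : Integrable f₁ μ := (hK.sub (integrable_const σ₁)).pos_part
  have hf₂ : Integrable f₂ μ := (hS.sub hσ₂).pos_part
  have hI₂' : Measurable I₂ := hI₂.mono hm le_rfl
  have hAS := hS.zero_or_one_mul hA.aestronglyMeasurable hA01
  have hI₁f₁ := hf₁.zero_or_one_mul hI₁.aestronglyMeasurable hI₁01
  have hI₂f₂ := hf₂.zero_or_one_mul hI₂'.aestronglyMeasurable hI₂01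
  have hI₁c₁ := (integrable_const (μ := μ) c₁).zero_or_one_mul hI₁.aestronglyMeasurable hI₁01
  have hI₂c₂ := (integrable_const (μ := μ) c₂).zero_or_one_mul hI₂'.aestronglyMeasurable hI₂01
  have hpay₁ : ∫ ω, I₁ ω * c₁ ∂μ = ∫ ω, I₁ ω * f₁ ω ∂μ :=
    integral_mul_const_eq_of_indepFun
      (hI₁indep.comp measurable_id ((measurable_id.sub_const σ₁).max measurable_const))
      hI₁.aestronglyMeasurable hf₁.aestronglyMeasurable hc₁
  have hpay₂ : ∫ ω, I₂ ω * c₂ ∂μ = ∫ ω, I₂ ω * f₂ ω ∂μ :=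
    integral_mul_const_eq_of_condExp_eq hm hI₂.stronglyMeasurable hI₂f₂ hf₂ hc₂
  calc ∫ ω, (A ω * S ω - I₁ ω * c₁ - I₂ ω * c₂) ∂μ
      = ∫ ω, (A ω * S ω - I₁ ω * f₁ ω - I₂ ω * f₂ ω) ∂μ := by
        rw [integral_sub, integral_sub hAS hI₁c₁, integral_sub, integral_sub hAS hI₁f₁,
          hpay₁, hpay₂]
        exacts [hAS.sub hI₁f₁, hI₂f₂, hAS.sub hI₁c₁, hI₂c₂]
    _ ≤ ∫ ω, A ω * min σ₁ (min (σ₂ ω) (S ω)) ∂μ := by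
        refine integral_mono ((hAS.sub hI₁f₁).sub hI₂f₂)
          (((integrable_const σ₁).inf hK).zero_or_one_mul hA.aestronglyMeasurable hA01)
          fun ω => ?_
        rw [nested_min_eq_sub_surplus]
        exact mul_sub_mul_sub_mul_le (hAI₁ ω) (hAI₂ ω) (le_max_right _ _) (le_max_right _ _)

end

theorem oriented_welfare_bound_general
    {Ω : Type*} [m0 : MeasurableSpace Ω] (μ : Measure Ω) [IsProbabilityMeasure μ]
    {V : Type*} (O : Finset (V × V))
    (v1 v2 : V × V → Ω → ℝ) (c1 c2 : V × V → ℝ)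
    (σ1 : V × V → ℝ) (σ2 : V × V → Ω → ℝ) (κ : V × V → Ω → ℝ)
    (m2 : V × V → MeasurableSpace Ω) (hm2 : ∀ e, m2 e ≤ m0)
    (A I1 I2 : V × V → Ω → ℝ)
    (hAmeas : ∀ e, Measurable (A e)) (hI1meas : ∀ e, Measurable (I1 e))
    (hA01 : ∀ e ω, A e ω = 0 ∨ A e ω = 1)
    (hI101 : ∀ e ω, I1 e ω = 0 ∨ I1 e ω = 1)
    (hI201 : ∀ e ω, I2 e ω = 0 ∨ I2 e ω = 1)
    (hchain : ∀ e ω, A e ω ≤ I2 e ω ∧ I2 e ω ≤ I1 e ω)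
    (hκ : ∀ e ω, κ e ω = min (σ1 e) (min (σ2 e ω) (v1 e ω + v2 e ω)))
    (hσ1 : ∀ e ∈ O, ∫ ω, max (min (σ2 e ω) (v1 e ω + v2 e ω) - σ1 e) 0 ∂μ = c1 e)
    (hσ2 : ∀ e ∈ O, (μ[(fun ω => max (v1 e ω + v2 e ω - σ2 e ω) 0) | m2 e])
        =ᵐ[μ] fun _ => c2 e)
    (hI1indep : ∀ e ∈ O, ProbabilityTheory.IndepFun (I1 e)
        (fun ω => min (σ2 e ω) (v1 e ω + v2 e ω)) μ)
    (hI2meas : ∀ e ∈ O, Measurable[m2 e] (I2 e))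
    (hvint : ∀ e ∈ O, Integrable (fun ω => v1 e ω + v2 e ω) μ)
    (hσ2int : ∀ e ∈ O, Integrable (σ2 e) μ) :
    ∫ ω, (∑ e ∈ O, (A e ω * (v1 e ω + v2 e ω) - I1 e ω * c1 e - I2 e ω * c2 e)) ∂μ ≤
      ∫ ω, (∑ e ∈ O, A e ω * κ e ω) ∂μ := by
  simp only [hκ]
  have hwelfare_int : ∀ e ∈ O, Integrable
      (fun ω => A e ω * (v1 e ω + v2 e ω) - I1 e ω * c1 e - I2 e ω * c2 e) μ := fun e he =>
    (((hvint e he).zero_or_one_mul (hAmeas e).aestronglyMeasurable (hA01 e)).sub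
      ((integrable_const _).zero_or_one_mul (hI1meas e).aestronglyMeasurable (hI101 e))).sub
      ((integrable_const _).zero_or_one_mul
        ((hI2meas e he).mono (hm2 e) le_rfl).aestronglyMeasurable (hI201 e))
  have hcap_int : ∀ e ∈ O, Integrable
      (fun ω => A e ω * min (σ1 e) (min (σ2 e ω) (v1 e ω + v2 e ω))) μ := fun e he =>
    ((integrable_const _).inf ((hσ2int e he).inf (hvint e he))).zero_or_one_mul
      (hAmeas e).aestronglyMeasurable (hA01 e)
  rw [integral_finsetSum O hwelfare_int, integral_finsetSum O hcap_int]
  exact Finset.sum_le_sum fun e he =>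
    integral_welfare_le_integral_mul_nested_min (hm2 e) (hvint e he) (hσ2int e he)
      (hσ1 e he) (hσ2 e he) (hI1indep e he) (hAmeas e) (hI1meas e) (hI2meas e he) (hA01 e)
      (hI101 e) (hI201 e) (fun ω => (hchain e ω).1.trans (hchain e ω).2)
      (fun ω => (hchain e ω).1)

/-- Amortization bound for `O`-oriented algorithms in Pandora's Matching Problem:
each oriented edge `e = (i,j) ∈ O` is a two-stage nested basket (first box costs
`c1 e`, revealing `v1 e`; second box costs `c2 e`, revealing the total value
`v1 e + v2 e`), with nested Weitzman indices `σ1 e` (deterministic) and `σ2 e`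
(measurable in the first-stage information `m2 e`) and capped value
`κ e = min (σ1 e) (min (σ2 e) (v1 e + v2 e))`. For any `O`-oriented algorithm —
0/1 indicators `A e ≤ I2 e ≤ I1 e` with `I1 e` independent of the basket's
contents, `I2 e` measurable in `m2 e`, and the claimed edges forming a matching —
the expected welfare is at most `E[∑_{e ∈ O} A e · κ e]`. -/
theorem oriented_welfare_bound
    {Ω : Type*} [m0 : MeasurableSpace Ω] (μ : Measure Ω) [IsProbabilityMeasure μ]
    {V : Type*} [DecidableEq V] (O : Finset (V × V))
    (v1 v2 : V × V → Ω → ℝ) (c1 c2 : V × V → ℝ)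
    (σ1 : V × V → ℝ) (σ2 : V × V → Ω → ℝ) (κ : V × V → Ω → ℝ)
    (m2 : V × V → MeasurableSpace Ω) (hm2 : ∀ e, m2 e ≤ m0)
    (A I1 I2 : V × V → Ω → ℝ)
    (hAmeas : ∀ e, Measurable (A e)) (hI1meas : ∀ e, Measurable (I1 e))
    (hA01 : ∀ e ω, A e ω = 0 ∨ A e ω = 1)
    (hI101 : ∀ e ω, I1 e ω = 0 ∨ I1 e ω = 1)
    (hI201 : ∀ e ω, I2 e ω = 0 ∨ I2 e ω = 1)
    (hchain : ∀ e ω, A e ω ≤ I2 e ω ∧ I2 e ω ≤ I1 e ω)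
    (hmatch : ∀ ω, ∀ e ∈ O, ∀ e' ∈ O, e ≠ e' → A e ω = 1 → A e' ω = 1 →
      e.1 ≠ e'.1 ∧ e.1 ≠ e'.2 ∧ e.2 ≠ e'.1 ∧ e.2 ≠ e'.2)
    (hκ : ∀ e ω, κ e ω = min (σ1 e) (min (σ2 e ω) (v1 e ω + v2 e ω)))
    (hσ1 : ∀ e ∈ O, ∫ ω, max (min (σ2 e ω) (v1 e ω + v2 e ω) - σ1 e) 0 ∂μ = c1 e)
    (hσ2meas : ∀ e, Measurable[m2 e] (σ2 e))
    (hσ2 : ∀ e ∈ O, (μ[(fun ω => max (v1 e ω + v2 e ω - σ2 e ω) 0) | m2 e])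
        =ᵐ[μ] fun _ => c2 e)
    (hI1indep : ∀ e ∈ O, ProbabilityTheory.IndepFun (I1 e)
        (fun ω => min (σ2 e ω) (v1 e ω + v2 e ω)) μ)
    (hI2meas : ∀ e ∈ O, Measurable[m2 e] (I2 e))
    (hvint : ∀ e ∈ O, Integrable (fun ω => v1 e ω + v2 e ω) μ)
    (hκint : ∀ e ∈ O, Integrable (κ e) μ)
    (hσ2int : ∀ e ∈ O, Integrable (σ2 e) μ) :
    ∫ ω, (∑ e ∈ O, (A e ω * (v1 e ω + v2 e ω) - I1 e ω * c1 e - I2 e ω * c2 e)) ∂μ ≤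
      ∫ ω, (∑ e ∈ O, A e ω * κ e ω) ∂μ :=
  oriented_welfare_bound_general (m0 := m0) μ O v1 v2 c1 c2 σ1 σ2 κ m2 hm2 A I1 I2 hAmeas hI1meas
    hA01 hI101 hI201 hchain hκ hσ1 hσ2 hI1indep hI2meas hvint hσ2int
end

section
/- With probability one, the O-Oriented Descending Procedure produces exactly the matching output by the greedy maximum-weight matching algorithm on edge weights κ_{ij}^(1) (ties broken consistently): whenever it matches an edge e, κ_e^(1) ≥ κ_{e'}^(1) for every edge e' still legal to match at that time. -/
/-- The `O`-Oriented Descending Procedure matches greedily by capped value: each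
oriented edge is a basket with indices `σ e 1, σ e 2` and total value `σ e 3`
(stages count opened boxes; advancing from stage `2` to `3` matches the edge), the
procedure keeps a nonincreasing set of edges still legal to match, always advances
the legal basket with the largest current index, and retains a just-advanced basket.
Then, with probability one (here: in every realization), whenever it matches an edge
`e`, its capped value `κ_e^(1) = min (σ e 1) (min (σ e 2) (σ e 3))` is at least
`κ_{e'}^(1)` for every unmatched edge `e'` still legal to match at that time —
i.e. it produces exactly the greedy maximum-weight matching on weights `κ^(1)`. -/
theorem descending_matches_greedy
    {ι : Type*} [DecidableEq ι] (T : ℕ)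
    (σ : ι → ℕ → ℝ) (eligible : ℕ → Finset ι) (advance : ℕ → ι)
    (stage : ι → ℕ → ℕ)
    (hstage0 : ∀ i, stage i 0 = 0)
    (hmem : ∀ t < T, advance t ∈ eligible t)
    (hmono : ∀ t < T, eligible (t + 1) ⊆ eligible t)
    (hkeep : ∀ t < T, advance t ∈ eligible (t + 1))
    (hmax : ∀ t < T, ∀ j ∈ eligible t,
      σ j (stage j t + 1) ≤ σ (advance t) (stage (advance t) t + 1))
    (hcap : ∀ t < T, stage (advance t) t ≤ 2)
    (hstep : ∀ t < T, stage (advance t) (t + 1) = stage (advance t) t + 1)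
    (hfix : ∀ t < T, ∀ j, j ≠ advance t → stage j (t + 1) = stage j t) :
    ∀ t < T, stage (advance t) t = 2 →
      ∀ j ∈ eligible t, stage j t ≤ 2 →
        min (σ j 1) (min (σ j 2) (σ j 3)) ≤
          min (σ (advance t) 1) (min (σ (advance t) 2) (σ (advance t) 3)) := by
  intro t ht he j hj hj2
  set e := advance t with hedef
  -- single-step monotonicity of stages
  have step_mono : ∀ i s, s < T → stage i s ≤ stage i (s + 1) := by
    intro i s hs
    by_cases h : i = advance s
    · rw [h, hstep s hs]; omega
    · rw [hfix s hs i h]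
  -- stage monotone in time
  have mono : ∀ i s u, s ≤ u → u ≤ T → stage i s ≤ stage i u := by
    intro i s u hsu huT
    induction u with
    | zero => have : s = 0 := by omega
              simp [this]
    | succ n ih =>
      rcases Nat.lt_or_ge s (n + 1) with h | h
      · exact le_trans (ih (by omega) (by omega)) (step_mono i n (by omega))
      · have : s = n + 1 := by omega
        simp [this]
  -- eligibility antitone in time
  have elig_mono : ∀ s u, s ≤ u → u < T → eligible u ⊆ eligible s := by
    intro s u hsu huT
    induction u with
    | zero => have : s = 0 := by omega
              simp [this]
    | succ n ih =>
      rcases Nat.lt_or_ge s (n + 1) with h | h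
      · exact (hmono n (by omega)).trans (ih (by omega) (by omega))
      · have : s = n + 1 := by omega
        simp [this]
  -- intermediate value: find the time when e's stage was exactly v
  have ivt : ∀ u, u ≤ T → ∀ v, v < stage e u →
      ∃ s < u, stage e s = v ∧ stage e (s + 1) = v + 1 := by
    intro u huT
    induction u with
    | zero => intro v hv; rw [hstage0] at hv; omega
    | succ n ih =>
      intro v hv
      rcases Nat.lt_or_ge v (stage e n) with h | h
      · obtain ⟨s, hs, h1, h2⟩ := ih (by omega) v h
        exact ⟨s, by omega, h1, h2⟩
      · -- stage e n ≤ v < stage e (n+1) ≤ stage e n + 1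
        have hn : n < T := by omega
        have hub : stage e (n + 1) ≤ stage e n + 1 := by
          by_cases hea : e = advance n
          · rw [hea, hstep n hn]
          · rw [hfix n hn e hea]; omega
        exact ⟨n, by omega, by omega, by omega⟩
  -- the key bound at a time s where j is eligible
  have key : ∀ s, s ≤ t → s < T → j ∈ eligible s →
      min (σ j 1) (min (σ j 2) (σ j 3)) ≤ σ (advance s) (stage (advance s) s + 1) := by
    intro s hst hs hjel
    have h1 := hmax s hs j hjel
    have hjs : stage j s ≤ 2 := le_trans (mono j s t (by omega) (by omega)) hj2
    have h2 : min (σ j 1) (min (σ j 2) (σ j 3)) ≤ σ j (stage j s + 1) := by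
      have : stage j s = 0 ∨ stage j s = 1 ∨ stage j s = 2 := by omega
      rcases this with h | h | h <;> rw [h] <;> simp [min_le_left, min_le_right,
        le_trans (min_le_right _ _) (min_le_left _ _),
        le_trans (min_le_right _ _) (min_le_right _ _)]
    linarith
  -- at time t : bound by σ e 3
  have b3 : min (σ j 1) (min (σ j 2) (σ j 3)) ≤ σ e 3 := by
    have := key t le_rfl ht hj
    rwa [← hedef, he] at this
  -- earlier times when e advanced from stage 0 and from stage 1
  have bk : ∀ v, v < 2 → min (σ j 1) (min (σ j 2) (σ j 3)) ≤ σ e (v + 1) := by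
    intro v hv
    obtain ⟨s, hst, h1, h2⟩ := ivt t (by omega) v (by omega)
    have hs : s < T := by omega
    have hea : advance s = e := by
      by_contra hne
      rw [hfix s hs e (fun h => hne h.symm)] at h2
      omega
    have hjel : j ∈ eligible s := elig_mono s t (by omega) ht hj
    have := key s (by omega) hs hjel
    rwa [hea, h1] at this
  have b1 := bk 0 (by omega)
  have b2 := bk 1 (by omega)
  simp only [le_min_iff]
  exact ⟨b1, b2, b3⟩
end
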